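/- Let β > 0, θ > 0, and let m* ∈ ℝ be a fixed point of F (i.e. F(m*) = m*) such that βθ·( ∫_ℝ x² p_{m*}(x) dx − (m*)² ) < 1. Then the fixed-point iteration is locally contractive at m*: there exist δ > 0 and k ∈ [0,1) such that |F(x) − F(y)| ≤ k·|x − y| for all x, y in the closed interval [m* − δ, m* + δ]. -/

import Mathlib

open MeasureTheory Real

/-- `Hfun β θ m x = β·V(x) + (βθ/2)(x − m)²` with the double-well potential `V(x) = (x²−1)²`. -/
noncomputable def Hfun (β θ m x : ℝ) : ℝ :=
  β * (x ^ 2 - 1) ^ 2 + β * θ / 2 * (x - m) ^ 2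

/-- `Zfun β θ m = ∫ exp(−H_m(x)) dx`, the normalizing constant. -/
noncomputable def Zfun (β θ m : ℝ) : ℝ := ∫ x : ℝ, Real.exp (-(Hfun β θ m x))

/-- `Nfun β θ m = ∫ x·exp(−H_m(x)) dx`. -/
noncomputable def Nfun (β θ m : ℝ) : ℝ := ∫ x : ℝ, x * Real.exp (-(Hfun β θ m x))

/-- The one-step fixed-point map `F(m) = N(m)/Z(m)` (the mean of `p_m`). -/
noncomputable def Fmap (β θ m : ℝ) : ℝ := Nfun β θ m / Zfun β θ m

/-- The probability density `p_m(x) = exp(−H_m(x))/Z(m)`. -/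
noncomputable def pdens (β θ m x : ℝ) : ℝ := Real.exp (-(Hfun β θ m x)) / Zfun β θ m

/-!
`F(m)` is the mean of `p_m`. The Gaussian tails `exp(-H_m(x)) ≤ exp(5β/4) exp(-βx²)`, uniform in
`m`, justify differentiating under the integral sign, which gives `F' = βθ Var_{p_m}(x)`: a
continuous, nonnegative function of `m`. At the fixed point this is the given quantity, so
`0 ≤ F'(m*) < 1`; a continuous derivative makes `F` strictly differentiable at `m*`, hence
Lipschitz near `m*` with any constant between `F'(m*)` and `1`.
-/

open Set Filter
open scoped NNReal

theorem integrable_pow_mul_exp_neg_mul_sq {b : ℝ} (hb : 0 < b) (n : ℕ) :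
    Integrable fun x : ℝ => x ^ n * exp (-b * x ^ 2) := by
  simpa [rpow_natCast] using
    integrable_rpow_mul_exp_neg_mul_sq hb (s := n) (by linarith [n.cast_nonneg (α := ℝ)])

theorem sq_integral_mul_le_integral_sq_mul_mul_integral {α : Type*} [MeasurableSpace α]
    {μ : Measure α} {f w : α → ℝ} (hw : 0 ≤ᵐ[μ] w) (h0 : Integrable w μ)
    (h1 : Integrable (fun a => f a * w a) μ) (h2 : Integrable (fun a => f a ^ 2 * w a) μ) :
    (∫ a, f a * w a ∂μ) ^ 2 ≤ (∫ a, f a ^ 2 * w a ∂μ) * ∫ a, w a ∂μ := by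
  have hquad : ∀ c : ℝ, 0 ≤ (∫ a, w a ∂μ) * (c * c) + (-2 * ∫ a, f a * w a ∂μ) * c
      + ∫ a, f a ^ 2 * w a ∂μ := by
    intro c
    have hexpand : (fun a => (f a - c) ^ 2 * w a)
        = fun a => (c * c) * w a + (-2 * c) * (f a * w a) + f a ^ 2 * w a := by
      funext a; ring
    have hnonneg : 0 ≤ ∫ a, (f a - c) ^ 2 * w a ∂μ :=
      integral_nonneg_of_ae (hw.mono fun a ha => mul_nonneg (sq_nonneg _) ha)
    have h01 : Integrable (fun a => (c * c) * w a + (-2 * c) * (f a * w a)) μ :=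
      (h0.const_mul _).add (h1.const_mul _)
    rw [hexpand, integral_add h01 h2, integral_add (h0.const_mul _) (h1.const_mul _),
      integral_const_mul, integral_const_mul] at hnonneg
    linarith
  have hdisc := discrim_le_zero hquad
  rw [discrim] at hdisc
  nlinarith

theorem HasStrictDerivAt.exists_lipschitzOnWith_Icc {f : ℝ → ℝ} {f' a : ℝ}
    (hf : HasStrictDerivAt f f' a) {c : ℝ≥0} (hc : ‖f'‖₊ < c) :
    ∃ K < c, ∃ δ > 0, LipschitzOnWith K f (Icc (a - δ) (a + δ)) := by
  obtain ⟨K, hf'K, hKc⟩ := exists_between hc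
  obtain ⟨s, hs, hlip⟩ :=
    hf.hasStrictFDerivAt.exists_lipschitzOnWith_of_nnnorm_lt K (by simpa using hf'K)
  obtain ⟨ε, hε, hball⟩ := Metric.mem_nhds_iff.mp hs
  refine ⟨K, hKc, ε / 2, half_pos hε, hlip.mono ?_⟩
  rw [← Real.closedBall_eq_Icc]
  exact (Metric.closedBall_subset_ball (half_lt_self hε)).trans hball

section Gibbs

variable {β θ : ℝ}

noncomputable def gibbsMoment (β θ : ℝ) (j : ℕ) (m : ℝ) : ℝ :=
  ∫ x : ℝ, x ^ j * exp (-Hfun β θ m x)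

theorem exp_neg_Hfun_le (hβ : 0 ≤ β) (hθ : 0 ≤ θ) (m x : ℝ) :
    exp (-Hfun β θ m x) ≤ exp (5 * β / 4) * exp (-β * x ^ 2) := by
  rw [← exp_add, exp_le_exp, Hfun]
  -- `(x² - 1)² - (x² - 5/4) = (x² - 3/2)²`
  nlinarith [mul_nonneg hβ (sq_nonneg (x ^ 2 - 3 / 2)),
    mul_nonneg (mul_nonneg hβ hθ) (sq_nonneg (x - m))]

theorem norm_pow_mul_exp_neg_Hfun_le (hβ : 0 ≤ β) (hθ : 0 ≤ θ) (j : ℕ) (m x : ℝ) :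
    ‖x ^ j * exp (-Hfun β θ m x)‖ ≤ exp (5 * β / 4) * ‖x ^ j * exp (-β * x ^ 2)‖ := by
  rw [norm_mul, norm_mul, Real.norm_of_nonneg (exp_pos _).le,
    Real.norm_of_nonneg (exp_pos _).le, mul_left_comm]
  exact mul_le_mul_of_nonneg_left (exp_neg_Hfun_le hβ hθ m x) (norm_nonneg _)

theorem continuous_pow_mul_exp_neg_Hfun (β θ : ℝ) (j : ℕ) (m : ℝ) :
    Continuous fun x => x ^ j * exp (-Hfun β θ m x) := by
  unfold Hfun; fun_prop

theorem integrable_pow_mul_exp_neg_Hfun (hβ : 0 < β) (hθ : 0 ≤ θ) (j : ℕ) (m : ℝ) :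
    Integrable fun x => x ^ j * exp (-Hfun β θ m x) :=
  ((integrable_pow_mul_exp_neg_mul_sq hβ j).norm.const_mul _).mono'
    (continuous_pow_mul_exp_neg_Hfun β θ j m).aestronglyMeasurable
    (ae_of_all _ (norm_pow_mul_exp_neg_Hfun_le hβ.le hθ j m))

theorem hasDerivAt_exp_neg_Hfun (β θ x m : ℝ) :
    HasDerivAt (fun m => exp (-Hfun β θ m x)) (β * θ * (x - m) * exp (-Hfun β θ m x)) m := by
  have hH : HasDerivAt (fun m => Hfun β θ m x) (-(β * θ * (x - m))) m := by
    unfold Hfun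
    exact (((hasDerivAt_id' m).const_sub x).fun_pow 2 |>.const_mul (β * θ / 2)).const_add
      (β * (x ^ 2 - 1) ^ 2) |>.congr_deriv (by ring)
  simpa [mul_comm] using hH.neg.exp

theorem hasDerivAt_gibbsMoment (hβ : 0 < β) (hθ : 0 ≤ θ) (j : ℕ) (m₀ : ℝ) :
    HasDerivAt (gibbsMoment β θ j)
      (β * θ * (gibbsMoment β θ (j + 1) m₀ - m₀ * gibbsMoment β θ j m₀)) m₀ := by
  set g : ℕ → ℝ → ℝ → ℝ := fun j m x => x ^ j * exp (-Hfun β θ m x)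
  set bound : ℝ → ℝ := fun x => β * θ * exp (5 * β / 4) *
    (‖x ^ (j + 1) * exp (-β * x ^ 2)‖ + (|m₀| + 1) * ‖x ^ j * exp (-β * x ^ 2)‖)
  have hg' : ∀ m x, β * θ * (x - m) * g j m x = β * θ * (g (j + 1) m x - m * g j m x) := by
    intro m x; simp only [g]; ring
  have hbound_int : Integrable bound :=
    (((integrable_pow_mul_exp_neg_mul_sq hβ (j + 1)).norm.add
      ((integrable_pow_mul_exp_neg_mul_sq hβ j).norm.const_mul _)).const_mul _)
  have hbound : ∀ x, ∀ m ∈ Metric.ball m₀ 1, ‖β * θ * (x - m) * g j m x‖ ≤ bound x := by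
    intro x m hm
    have hm_abs : |m| ≤ |m₀| + 1 := by
      have := abs_sub_abs_le_abs_sub m m₀
      rw [← Real.dist_eq] at this
      linarith [Metric.mem_ball.mp hm]
    have h1 := norm_pow_mul_exp_neg_Hfun_le hβ.le hθ (j + 1) m x
    have h0 := norm_pow_mul_exp_neg_Hfun_le hβ.le hθ j m x
    rw [hg', norm_mul, Real.norm_of_nonneg (by positivity)]
    calc β * θ * ‖g (j + 1) m x - m * g j m x‖
        ≤ β * θ * (‖g (j + 1) m x‖ + |m| * ‖g j m x‖) := by
          gcongr
          exact (norm_sub_le _ _).trans_eq (by rw [norm_mul m, Real.norm_eq_abs m])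
      _ ≤ β * θ * (exp (5 * β / 4) * ‖x ^ (j + 1) * exp (-β * x ^ 2)‖
            + (|m₀| + 1) * (exp (5 * β / 4) * ‖x ^ j * exp (-β * x ^ 2)‖)) := by
          gcongr
      _ = bound x := by ring
  obtain ⟨-, hd⟩ := hasDerivAt_integral_of_dominated_loc_of_deriv_le
    (F := g j) (F' := fun m x => β * θ * (x - m) * g j m x)
    (Metric.ball_mem_nhds m₀ one_pos)
    (Eventually.of_forall fun m =>
      (continuous_pow_mul_exp_neg_Hfun β θ j m).aestronglyMeasurable)
    (integrable_pow_mul_exp_neg_Hfun hβ hθ j m₀)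
    ((continuous_const.mul (continuous_id.sub continuous_const)).mul
      (continuous_pow_mul_exp_neg_Hfun β θ j m₀)).aestronglyMeasurable
    (ae_of_all _ hbound) hbound_int
    (ae_of_all _ fun x m _ => ((hasDerivAt_exp_neg_Hfun β θ x m).const_mul (x ^ j)).congr_deriv
      (by ring))
  refine hd.congr_deriv ?_
  simp_rw [hg']
  rw [integral_const_mul, integral_sub (integrable_pow_mul_exp_neg_Hfun hβ hθ (j + 1) m₀)
    ((integrable_pow_mul_exp_neg_Hfun hβ hθ j m₀).const_mul _), integral_const_mul]
  rfl

theorem Zfun_eq_gibbsMoment (β θ : ℝ) : Zfun β θ = gibbsMoment β θ 0 := by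
  funext m; simp [Zfun, gibbsMoment]

theorem Nfun_eq_gibbsMoment (β θ : ℝ) : Nfun β θ = gibbsMoment β θ 1 := by
  funext m; simp [Nfun, gibbsMoment]

theorem Zfun_pos (hβ : 0 < β) (hθ : 0 ≤ θ) (m : ℝ) : 0 < Zfun β θ m :=
  integral_exp_pos (by simpa using integrable_pow_mul_exp_neg_Hfun hβ hθ 0 m)

theorem integral_sq_mul_pdens (β θ m : ℝ) :
    ∫ x : ℝ, x ^ 2 * pdens β θ m x = gibbsMoment β θ 2 m / Zfun β θ m := by
  simp_rw [pdens, ← mul_div_assoc]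
  exact integral_div _ _

theorem sq_Nfun_le (hβ : 0 < β) (hθ : 0 ≤ θ) (m : ℝ) :
    Nfun β θ m ^ 2 ≤ gibbsMoment β θ 2 m * Zfun β θ m :=
  sq_integral_mul_le_integral_sq_mul_mul_integral (f := id)
    (ae_of_all _ fun x => (exp_pos _).le)
    (by simpa using integrable_pow_mul_exp_neg_Hfun hβ hθ 0 m)
    (by simpa using integrable_pow_mul_exp_neg_Hfun hβ hθ 1 m)
    (integrable_pow_mul_exp_neg_Hfun hβ hθ 2 m)

noncomputable def derivFmap (β θ m : ℝ) : ℝ :=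
  β * θ * (gibbsMoment β θ 2 m * Zfun β θ m - Nfun β θ m ^ 2) / Zfun β θ m ^ 2

theorem hasDerivAt_Fmap (hβ : 0 < β) (hθ : 0 ≤ θ) (m : ℝ) :
    HasDerivAt (Fmap β θ) (derivFmap β θ m) m := by
  have hZ := hasDerivAt_gibbsMoment hβ hθ 0 m
  have hN := hasDerivAt_gibbsMoment hβ hθ 1 m
  rw [← Zfun_eq_gibbsMoment, ← Nfun_eq_gibbsMoment] at hZ
  rw [← Nfun_eq_gibbsMoment] at hN
  exact (hN.div hZ (Zfun_pos hβ hθ m).ne').congr_deriv (by rw [derivFmap]; ring)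

theorem continuous_gibbsMoment (hβ : 0 < β) (hθ : 0 ≤ θ) (j : ℕ) :
    Continuous (gibbsMoment β θ j) :=
  continuous_iff_continuousAt.mpr fun m => (hasDerivAt_gibbsMoment hβ hθ j m).continuousAt

theorem continuous_derivFmap (hβ : 0 < β) (hθ : 0 ≤ θ) : Continuous (derivFmap β θ) := by
  have hZ := continuous_gibbsMoment hβ hθ 0
  have hN := continuous_gibbsMoment hβ hθ 1
  have hM := continuous_gibbsMoment hβ hθ 2
  rw [← Zfun_eq_gibbsMoment] at hZ
  rw [← Nfun_eq_gibbsMoment] at hN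
  exact (continuous_const.mul ((hM.mul hZ).sub (hN.pow 2))).div (hZ.pow 2)
    fun m => pow_ne_zero 2 (Zfun_pos hβ hθ m).ne'

theorem derivFmap_nonneg (hβ : 0 < β) (hθ : 0 ≤ θ) (m : ℝ) : 0 ≤ derivFmap β θ m :=
  div_nonneg (mul_nonneg (by positivity) (sub_nonneg.mpr (sq_Nfun_le hβ hθ m))) (sq_nonneg _)

theorem derivFmap_of_Fmap_eq (hβ : 0 < β) (hθ : 0 ≤ θ) {m : ℝ} (hm : Fmap β θ m = m) :
    derivFmap β θ m = β * θ * ((∫ x : ℝ, x ^ 2 * pdens β θ m x) - m ^ 2) := by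
  have hZ := (Zfun_pos hβ hθ m).ne'
  rw [Fmap, div_eq_iff hZ] at hm
  rw [derivFmap, integral_sq_mul_pdens, hm]
  field_simp

end Gibbs

/-- if `m*` is a fixed point of `F` with `βθ·(∫ x² p_{m*}(x) dx − (m*)²) < 1`,
then the fixed-point iteration is locally contractive at `m*`: there exist `δ > 0` and
`k ∈ [0,1)` such that `|F(x) − F(y)| ≤ k·|x − y|` for all `x, y ∈ [m* − δ, m* + δ]`. -/
theorem stmt_6 (β θ : ℝ) (hβ : 0 < β) (hθ : 0 < θ) (mstar : ℝ)
    (hfix : Fmap β θ mstar = mstar)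
    (hcrit : β * θ * ((∫ x : ℝ, x ^ 2 * pdens β θ mstar x) - mstar ^ 2) < 1) :
    ∃ δ > (0 : ℝ), ∃ k : ℝ, 0 ≤ k ∧ k < 1 ∧
      ∀ x ∈ Set.Icc (mstar - δ) (mstar + δ), ∀ y ∈ Set.Icc (mstar - δ) (mstar + δ),
        |Fmap β θ x - Fmap β θ y| ≤ k * |x - y| := by
  have hstrict : HasStrictDerivAt (Fmap β θ) (derivFmap β θ mstar) mstar :=
    hasStrictDerivAt_of_hasDerivAt_of_continuousAt
      (Eventually.of_forall (hasDerivAt_Fmap hβ hθ.le))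
      (continuous_derivFmap hβ hθ.le).continuousAt
  have hlt : ‖derivFmap β θ mstar‖₊ < 1 := by
    rw [← NNReal.coe_lt_coe, coe_nnnorm, Real.norm_of_nonneg (derivFmap_nonneg hβ hθ.le mstar),
      derivFmap_of_Fmap_eq hβ hθ.le hfix]
    exact hcrit
  obtain ⟨K, hK, δ, hδ, hlip⟩ := hstrict.exists_lipschitzOnWith_Icc hlt
  refine ⟨δ, hδ, K, K.2, hK, fun x hx y hy => ?_⟩
  simpa [Real.dist_eq] using hlip.dist_le_mul x hx y hy
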